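/- arXiv:2206.06049 — 2 statements merged into one kernel-verified Lean document; each statement's English description precedes it below -/
import Mathlib

section
/- Suppose φ ∈ L⁺_{□,◇,∧,∨}[Prop] and (E⁺, E⁻) is a pair of finite sets of finite pointed models such that φ fits (E⁺, E⁻), every pointed model satisfying φ weakly simulates some member of E⁺, and every pointed model not satisfying φ is weakly simulated by some member of E⁻. Then for every ψ ∈ L⁺_{□,◇,∧,∨}[Prop]: if ψ is true at every member of E⁺ then φ semantically entails ψ, and if ψ is false at every member of E⁻ then ψ semantically entails φ. Consequently, (E⁺, E⁻) is a finite characterization of φ with respect to L⁺_{□,◇,∧,∨}[Prop]. -/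
/-- Modal formulas in negation normal form over propositional variables indexed by `ℕ`.
`var p` is the propositional variable `p`; `nvar p` is the negated literal `¬ p`. -/
inductive MF : Type
  | var  : ℕ → MF
  | nvar : ℕ → MF
  | top  : MF
  | bot  : MF
  | and  : MF → MF → MF
  | or   : MF → MF → MF
  | dia  : MF → MF
  | box  : MF → MF

/-- Labels for the connectives `∧, ∨, ◇, □, ⊤, ⊥`. -/
inductive Conn : Type
  | conj | disj | dia | box | top | bot

/-- The set of connectives occurring in a modal formula. -/
def MF.conns : MF → Set Conn
  | .var _ => ∅
  | .nvar _ => ∅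
  | .top => {Conn.top}
  | .bot => {Conn.bot}
  | .and φ ψ => φ.conns ∪ ψ.conns ∪ {Conn.conj}
  | .or φ ψ => φ.conns ∪ ψ.conns ∪ {Conn.disj}
  | .dia φ => φ.conns ∪ {Conn.dia}
  | .box φ => φ.conns ∪ {Conn.box}

/-- The set of propositional variables occurring positively (unnegated) in a formula. -/
def MF.pvars : MF → Set ℕ
  | .var p => {p}
  | .nvar _ => ∅
  | .top => ∅
  | .bot => ∅
  | .and φ ψ => φ.pvars ∪ ψ.pvars
  | .or φ ψ => φ.pvars ∪ ψ.pvars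
  | .dia φ => φ.pvars
  | .box φ => φ.pvars

/-- The set of propositional variables occurring negatively (negated) in a formula. -/
def MF.nvars : MF → Set ℕ
  | .var _ => ∅
  | .nvar p => {p}
  | .top => ∅
  | .bot => ∅
  | .and φ ψ => φ.nvars ∪ ψ.nvars
  | .or φ ψ => φ.nvars ∪ ψ.nvars
  | .dia φ => φ.nvars
  | .box φ => φ.nvars

/-- The set of propositional variables occurring in a formula. -/
def MF.vars (φ : MF) : Set ℕ := φ.pvars ∪ φ.nvars

/-- `φ ∈ L_C[P]`: the formula `φ` (in negation normal form, built from literals) uses only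
connectives from `C` and variables from `P`. -/
def inLang (C : Set Conn) (P : Set ℕ) (φ : MF) : Prop := φ.conns ⊆ C ∧ φ.vars ⊆ P

/-- A formula is positive if no propositional variable occurs negated in it. -/
def Positive (φ : MF) : Prop := φ.nvars = ∅

/-- A formula is negative if every propositional variable occurs only negated in it. -/
def Negative (φ : MF) : Prop := φ.pvars = ∅

/-- `φ ∈ L⁺_C[P]`: positive fragment. -/
def inPosLang (C : Set Conn) (P : Set ℕ) (φ : MF) : Prop := inLang C P φ ∧ Positive φ

/-- `φ ∈ L⁻_C[P]`: negative fragment. -/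
def inNegLang (C : Set Conn) (P : Set ℕ) (φ : MF) : Prop := inLang C P φ ∧ Negative φ

/-- A Kripke model: a set of worlds, an accessibility relation, and a valuation. -/
structure KModel : Type 1 where
  W : Type
  R : W → W → Prop
  V : ℕ → Set W

/-- A pointed Kripke model. -/
structure PModel : Type 1 where
  M : KModel
  s : M.W

/-- Satisfaction of a modal formula at a world of a Kripke model. -/
def KModel.sat (M : KModel) : M.W → MF → Prop
  | s, .var p => s ∈ M.V p
  | s, .nvar p => s ∉ M.V p
  | _, .top => True
  | _, .bot => False
  | s, .and φ ψ => M.sat s φ ∧ M.sat s ψ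
  | s, .or φ ψ => M.sat s φ ∨ M.sat s ψ
  | s, .dia φ => ∃ t, M.R s t ∧ M.sat t φ
  | s, .box φ => ∀ t, M.R s t → M.sat t φ

/-- Satisfaction in a pointed model. -/
def PModel.sat (e : PModel) (φ : MF) : Prop := e.M.sat e.s φ

/-- A pointed model is finite if its set of worlds is finite. -/
def PModel.finite (e : PModel) : Prop := Finite e.M.W

/-- `φ` fits the pair of example sets `(Epos, Eneg)`. -/
def Fits (φ : MF) (Epos Eneg : Set PModel) : Prop :=
  (∀ e ∈ Epos, e.sat φ) ∧ (∀ e ∈ Eneg, ¬ e.sat φ)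

/-- Semantic equivalence of modal formulas. -/
def EquivF (φ ψ : MF) : Prop := ∀ e : PModel, e.sat φ ↔ e.sat ψ

/-- Semantic entailment of modal formulas. -/
def Entails (φ ψ : MF) : Prop := ∀ e : PModel, e.sat φ → e.sat ψ

/-- `(Epos, Eneg)` is a finite characterization of `φ` with respect to the set `L` of
formulas: both sets are finite, consist of finite pointed models, `φ` fits them, and every
`ψ ∈ L` fitting them is semantically equivalent to `φ`. -/
def FinChar (L : Set MF) (φ : MF) (Epos Eneg : Set PModel) : Prop :=
  Epos.Finite ∧ Eneg.Finite ∧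
  (∀ e ∈ Epos, e.finite) ∧ (∀ e ∈ Eneg, e.finite) ∧
  Fits φ Epos Eneg ∧
  ∀ ψ ∈ L, Fits ψ Epos Eneg → EquivF φ ψ

/-- `Z` is a bisimulation between the models `M` and `M'` relative to the set `P` of
propositional variables: atom-equivalence on `P`, forth, and back. -/
def Bisim (P : Set ℕ) (M M' : KModel) (Z : M.W → M'.W → Prop) : Prop :=
  ∀ t t', Z t t' →
    (∀ p ∈ P, (t ∈ M.V p ↔ t' ∈ M'.V p)) ∧
    (∀ u, M.R t u → ∃ u', M'.R t' u' ∧ Z u u') ∧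
    (∀ u', M'.R t' u' → ∃ u, M.R t u ∧ Z u u')

/-- `(M, s)` and `(M', s')` are bisimilar (relative to `P`). -/
def Bisimilar (P : Set ℕ) (M : KModel) (s : M.W) (M' : KModel) (s' : M'.W) : Prop :=
  ∃ Z, Bisim P M M' Z ∧ Z s s'

/-- The model with a single reflexive world, at which exactly the variables in `A` are true.
`loopModel ∅` is `⟲_∅` and `loopModel P` is `⟲_Prop`. -/
def loopModel (A : Set ℕ) : KModel :=
  { W := PUnit, R := fun _ _ => True, V := fun p => {_x | p ∈ A} }

/-- `Z` is a simulation between the pointed models `(M, s)` and `(M', s')` relative to `P`: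
it relates `s` to `s'` and satisfies (atom), (forth) and (back). -/
def Sim (P : Set ℕ) (M : KModel) (s : M.W) (M' : KModel) (s' : M'.W)
    (Z : M.W → M'.W → Prop) : Prop :=
  Z s s' ∧
  ∀ t t', Z t t' →
    (∀ p ∈ P, t ∈ M.V p → t' ∈ M'.V p) ∧
    (∀ u, M.R t u → ∃ u', M'.R t' u' ∧ Z u u') ∧
    (∀ u', M'.R t' u' → ∃ u, M.R t u ∧ Z u u')

/-- `Z` is a weak simulation between the pointed models `(M, s)` and `(M', s')` relative
to `P`: it relates `s` to `s'` and satisfies (atom), (forth') and (back'). -/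
def WeakSim (P : Set ℕ) (M : KModel) (s : M.W) (M' : KModel) (s' : M'.W)
    (Z : M.W → M'.W → Prop) : Prop :=
  Z s s' ∧
  ∀ t t', Z t t' →
    (∀ p ∈ P, t ∈ M.V p → t' ∈ M'.V p) ∧
    (∀ u, M.R t u →
      Bisimilar P M u (loopModel ∅) PUnit.unit ∨ ∃ u', M'.R t' u' ∧ Z u u') ∧
    (∀ u', M'.R t' u' →
      Bisimilar P M' u' (loopModel P) PUnit.unit ∨ ∃ u, M.R t u ∧ Z u u')

/-- `(M', s')` weakly simulates `(M, s)` (relative to `P`). -/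
def WeaklySimulates (P : Set ℕ) (M' : KModel) (s' : M'.W) (M : KModel) (s : M.W) : Prop :=
  ∃ Z, WeakSim P M s M' s' Z

lemma bisim_inv (P : Set ℕ) (M M' : KModel) (Z : M.W → M'.W → Prop)
    (hZ : Bisim P M M' Z) :
    ∀ φ : MF, φ.vars ⊆ P → ∀ t t', Z t t' → (M.sat t φ ↔ M'.sat t' φ) := by
  intro φ
  induction φ with
  | var p =>
    intro hv t t' h
    simpa [KModel.sat] using (hZ t t' h).1 p (hv (by simp [MF.vars, MF.pvars]))
  | nvar p =>
    intro hv t t' h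
    have := (hZ t t' h).1 p (hv (by simp [MF.vars, MF.nvars]))
    simp only [KModel.sat]; tauto
  | top => intro _ _ _ _; simp [KModel.sat]
  | bot => intro _ _ _ _; simp [KModel.sat]
  | and φ ψ ih1 ih2 =>
    intro hv t t' h
    have h1 := ih1 (fun x hx => hv (by simp only [MF.vars, MF.pvars, MF.nvars, Set.mem_union] at hx ⊢; tauto)) t t' h
    have h2 := ih2 (fun x hx => hv (by simp only [MF.vars, MF.pvars, MF.nvars, Set.mem_union] at hx ⊢; tauto)) t t' h
    simp only [KModel.sat]; tauto
  | or φ ψ ih1 ih2 =>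
    intro hv t t' h
    have h1 := ih1 (fun x hx => hv (by simp only [MF.vars, MF.pvars, MF.nvars, Set.mem_union] at hx ⊢; tauto)) t t' h
    have h2 := ih2 (fun x hx => hv (by simp only [MF.vars, MF.pvars, MF.nvars, Set.mem_union] at hx ⊢; tauto)) t t' h
    simp only [KModel.sat]; tauto
  | dia φ ih =>
    intro hv t t' h
    have hv' : φ.vars ⊆ P := by
      intro x hx; exact hv (by simp only [MF.vars, MF.pvars, MF.nvars, Set.mem_union] at hx ⊢; tauto)
    simp only [KModel.sat]
    constructor
    · rintro ⟨u, hRu, hu⟩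
      obtain ⟨u', hR', hZ'⟩ := (hZ t t' h).2.1 u hRu
      exact ⟨u', hR', (ih hv' u u' hZ').1 hu⟩
    · rintro ⟨u', hRu', hu'⟩
      obtain ⟨u, hR, hZ'⟩ := (hZ t t' h).2.2 u' hRu'
      exact ⟨u, hR, (ih hv' u u' hZ').2 hu'⟩
  | box φ ih =>
    intro hv t t' h
    have hv' : φ.vars ⊆ P := by
      intro x hx; exact hv (by simp only [MF.vars, MF.pvars, MF.nvars, Set.mem_union] at hx ⊢; tauto)
    simp only [KModel.sat]
    constructor
    · intro hall u' hRu'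
      obtain ⟨u, hR, hZ'⟩ := (hZ t t' h).2.2 u' hRu'
      exact (ih hv' u u' hZ').1 (hall u hR)
    · intro hall u hRu
      obtain ⟨u', hR', hZ'⟩ := (hZ t t' h).2.1 u hRu
      exact (ih hv' u u' hZ').2 (hall u' hR')

lemma not_sat_loopEmpty (ψ : MF) (htop : Conn.top ∉ ψ.conns) (hpos : ψ.nvars = ∅) :
    ¬ (loopModel ∅).sat PUnit.unit ψ := by
  induction ψ with
  | var p => intro h; exact h
  | nvar p => simp [MF.nvars] at hpos
  | top => simp [MF.conns] at htop
  | bot => simp [KModel.sat]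
  | and φ ψ ih1 ih2 =>
    simp only [MF.conns, Set.mem_union] at htop
    simp only [MF.nvars, Set.union_empty_iff] at hpos
    have := ih1 (fun h => htop (Or.inl (Or.inl h))) hpos.1
    simp only [KModel.sat]; tauto
  | or φ ψ ih1 ih2 =>
    simp only [MF.conns, Set.mem_union] at htop
    simp only [MF.nvars, Set.union_empty_iff] at hpos
    have h1 := ih1 (fun h => htop (Or.inl (Or.inl h))) hpos.1
    have h2 := ih2 (fun h => htop (Or.inl (Or.inr h))) hpos.2
    simp only [KModel.sat]; tauto
  | dia φ ih =>
    simp only [MF.conns, Set.mem_union] at htop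
    simp only [MF.nvars] at hpos
    have := ih (fun h => htop (Or.inl h)) hpos
    simp only [KModel.sat, loopModel]
    rintro ⟨⟨⟩, -, hu⟩; exact this hu
  | box φ ih =>
    simp only [MF.conns, Set.mem_union] at htop
    simp only [MF.nvars] at hpos
    have := ih (fun h => htop (Or.inl h)) hpos
    intro hall
    exact this (hall PUnit.unit trivial)

lemma sat_loopFull (P : Set ℕ) (ψ : MF) (hbot : Conn.bot ∉ ψ.conns)
    (hpos : ψ.nvars = ∅) (hv : ψ.pvars ⊆ P) :
    (loopModel P).sat PUnit.unit ψ := by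
  induction ψ with
  | var p =>
    have : p ∈ P := hv (by simp [MF.pvars])
    exact this
  | nvar p => simp [MF.nvars] at hpos
  | top => simp [KModel.sat]
  | bot => simp [MF.conns] at hbot
  | and φ ψ ih1 ih2 =>
    simp only [MF.conns, Set.mem_union] at hbot
    simp only [MF.nvars, Set.union_empty_iff] at hpos
    simp only [MF.pvars, Set.union_subset_iff] at hv
    exact ⟨ih1 (fun h => hbot (Or.inl (Or.inl h))) hpos.1 hv.1,
           ih2 (fun h => hbot (Or.inl (Or.inr h))) hpos.2 hv.2⟩
  | or φ ψ ih1 ih2 =>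
    simp only [MF.conns, Set.mem_union] at hbot
    simp only [MF.nvars, Set.union_empty_iff] at hpos
    simp only [MF.pvars, Set.union_subset_iff] at hv
    exact Or.inl (ih1 (fun h => hbot (Or.inl (Or.inl h))) hpos.1 hv.1)
  | dia φ ih =>
    simp only [MF.conns, Set.mem_union] at hbot
    simp only [MF.nvars] at hpos
    simp only [MF.pvars] at hv
    exact ⟨PUnit.unit, trivial, ih (fun h => hbot (Or.inl h)) hpos hv⟩
  | box φ ih =>
    simp only [MF.conns, Set.mem_union] at hbot
    simp only [MF.nvars] at hpos
    simp only [MF.pvars] at hv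
    intro u _
    exact ih (fun h => hbot (Or.inl h)) hpos hv

lemma weak_sim_preserves (P : Set ℕ) (M M' : KModel) (Z : M.W → M'.W → Prop)
    (hZ : ∀ t t', Z t t' →
      (∀ p ∈ P, t ∈ M.V p → t' ∈ M'.V p) ∧
      (∀ u, M.R t u →
        Bisimilar P M u (loopModel ∅) PUnit.unit ∨ ∃ u', M'.R t' u' ∧ Z u u') ∧
      (∀ u', M'.R t' u' →
        Bisimilar P M' u' (loopModel P) PUnit.unit ∨ ∃ u, M.R t u ∧ Z u u')) :
    ∀ ψ : MF, ψ.conns ⊆ {Conn.box, Conn.dia, Conn.conj, Conn.disj} →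
      ψ.nvars = ∅ → ψ.pvars ⊆ P →
      ∀ t t', Z t t' → M.sat t ψ → M'.sat t' ψ := by
  intro ψ
  induction ψ with
  | var p =>
    intro _ _ hv t t' h hs
    exact (hZ t t' h).1 p (hv (by simp [MF.pvars])) hs
  | nvar p => intro _ hpos; simp [MF.nvars] at hpos
  | top => intro _ _ _ _ _ _ _; trivial
  | bot => intro _ _ _ _ _ _ hs; exact hs.elim
  | and φ ψ ih1 ih2 =>
    intro hc hpos hv t t' h hs
    simp only [MF.conns, Set.union_subset_iff] at hc
    simp only [MF.nvars, Set.union_empty_iff] at hpos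
    simp only [MF.pvars, Set.union_subset_iff] at hv
    exact ⟨ih1 hc.1.1 hpos.1 hv.1 t t' h hs.1, ih2 hc.1.2 hpos.2 hv.2 t t' h hs.2⟩
  | or φ ψ ih1 ih2 =>
    intro hc hpos hv t t' h hs
    simp only [MF.conns, Set.union_subset_iff] at hc
    simp only [MF.nvars, Set.union_empty_iff] at hpos
    simp only [MF.pvars, Set.union_subset_iff] at hv
    rcases hs with hs | hs
    · exact Or.inl (ih1 hc.1.1 hpos.1 hv.1 t t' h hs)
    · exact Or.inr (ih2 hc.1.2 hpos.2 hv.2 t t' h hs)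
  | dia φ ih =>
    intro hc hpos hv t t' h hs
    simp only [MF.conns, Set.union_subset_iff] at hc
    simp only [MF.nvars] at hpos
    simp only [MF.pvars] at hv
    obtain ⟨u, hRu, hu⟩ := hs
    rcases (hZ t t' h).2.1 u hRu with ⟨Z', hB, hZu⟩ | ⟨u', hR', hZ'⟩
    · exfalso
      have hvars : φ.vars ⊆ P := by
        intro x hx
        simp only [MF.vars, Set.mem_union, hpos] at hx
        rcases hx with hx | hx
        · exact hv hx
        · exact hx.elim
      have := (bisim_inv P M (loopModel ∅) Z' hB φ hvars u PUnit.unit hZu).1 hu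
      have htop : Conn.top ∉ φ.conns := by
        intro hmem
        have := hc.1 hmem
        simp at this
      exact not_sat_loopEmpty φ htop hpos this
    · exact ⟨u', hR', ih hc.1 hpos hv u u' hZ' hu⟩
  | box φ ih =>
    intro hc hpos hv t t' h hs
    simp only [MF.conns, Set.union_subset_iff] at hc
    simp only [MF.nvars] at hpos
    simp only [MF.pvars] at hv
    intro u' hRu'
    rcases (hZ t t' h).2.2 u' hRu' with ⟨Z', hB, hZu⟩ | ⟨u, hR, hZ'⟩
    · have hvars : φ.vars ⊆ P := by
        intro x hx
        simp only [MF.vars, Set.mem_union, hpos] at hx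
        rcases hx with hx | hx
        · exact hv hx
        · exact hx.elim
      have hbot : Conn.bot ∉ φ.conns := by
        intro hmem
        have := hc.1 hmem
        simp at this
      exact (bisim_inv P M' (loopModel P) Z' hB φ hvars u' PUnit.unit hZu).2
        (sat_loopFull P φ hbot hpos hv)
    · exact ih hc.1 hpos hv u u' hZ' (hs u hR)

/-- If `φ ∈ L⁺_{□,◇,∧,∨}[P]` fits a pair `(Epos, Eneg)` of finite sets of
finite pointed models forming a weak-simulation duality for `φ`, then for every
`ψ ∈ L⁺_{□,◇,∧,∨}[P]`: if `ψ` is true at every member of `Epos` then `φ` entails `ψ`, and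
if `ψ` is false at every member of `Eneg` then `ψ` entails `φ`. Consequently `(Epos, Eneg)`
is a finite characterization of `φ` with respect to `L⁺_{□,◇,∧,∨}[P]`. -/
theorem duality_gives_finite_characterization
    (P : Set ℕ) (hfin : P.Finite) (φ : MF)
    (hφ : inPosLang {Conn.box, Conn.dia, Conn.conj, Conn.disj} P φ)
    (Epos Eneg : Set PModel)
    (hEpos : Epos.Finite) (hEneg : Eneg.Finite)
    (hposfin : ∀ e ∈ Epos, e.finite) (hnegfin : ∀ e ∈ Eneg, e.finite)
    (hfits : Fits φ Epos Eneg)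
    (hdualpos : ∀ (M : KModel) (s : M.W), M.sat s φ →
      ∃ e ∈ Epos, WeaklySimulates P M s e.M e.s)
    (hdualneg : ∀ (M : KModel) (s : M.W), ¬ M.sat s φ →
      ∃ e ∈ Eneg, WeaklySimulates P e.M e.s M s) :
    (∀ ψ : MF, inPosLang {Conn.box, Conn.dia, Conn.conj, Conn.disj} P ψ →
      ((∀ e ∈ Epos, e.sat ψ) → Entails φ ψ) ∧
      ((∀ e ∈ Eneg, ¬ e.sat ψ) → Entails ψ φ)) ∧
    FinChar {ψ : MF | inPosLang {Conn.box, Conn.dia, Conn.conj, Conn.disj} P ψ}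
      φ Epos Eneg := by
  have key : ∀ ψ : MF, inPosLang {Conn.box, Conn.dia, Conn.conj, Conn.disj} P ψ →
      ((∀ e ∈ Epos, e.sat ψ) → Entails φ ψ) ∧
      ((∀ e ∈ Eneg, ¬ e.sat ψ) → Entails ψ φ) := by
    intro ψ hψ
    obtain ⟨⟨hc, hv⟩, hpos⟩ := hψ
    have hpv : ψ.pvars ⊆ P := fun x hx => hv (by simp [MF.vars]; tauto)
    constructor
    · intro hall e hsat
      obtain ⟨e', he', Z, hZs, hZ⟩ := hdualpos e.M e.s hsat
      exact weak_sim_preserves P e'.M e.M Z hZ ψ hc hpos hpv e'.s e.s hZs (hall e' he')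
    · intro hall e hsat
      by_contra hns
      obtain ⟨e', he', Z, hZs, hZ⟩ := hdualneg e.M e.s hns
      exact hall e' he' (weak_sim_preserves P e.M e'.M Z hZ ψ hc hpos hpv e.s e'.s hZs hsat)
  refine ⟨key, hEpos, hEneg, hposfin, hnegfin, hfits, ?_⟩
  intro ψ hψ hfitψ e
  exact ⟨fun h => (key ψ hψ).1 hfitψ.1 e h, fun h => (key ψ hψ).2 hfitψ.2 e h⟩
end

section
/- The negative modal language L⁻_{□,◇,∧,∨} is finitely characterizable: for every finite set Prop of propositional variables, every formula φ ∈ L⁻_{□,◇,∧,∨}[Prop] has a finite characterization with respect to L⁻_{□,◇,∧,∨}[Prop]. -/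
/-! A world's depth-`n` profile records its valuation on `P` and, recursively, the set of
depth-`(n - 1)` profiles of its successors; the depth-`0` profile is a single reflexive cap world
at which every variable is true, or every variable is false. As `P` is finite there are finitely
many profiles, each realised by a finite model, and a formula of depth `< n` has the same truth
value at a world and at its depth-`n` profile. A negative formula without `⊤` and `⊥` fails at
the all-true cap and holds at the all-false cap, so passing from a world to its profile it can
only become false under the all-true cap, and only become true under the all-false cap.

With `n = depth φ + 1`, take as positive examples the all-true-capped profiles satisfying `φ` and
as negative examples the all-false-capped profiles falsifying `φ`. If `ψ` fits them and `w ⊨ φ`,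
then the all-true-capped profile of `w` satisfies `φ`, hence `ψ`, hence `w ⊨ ψ`; symmetrically,
`w ⊨ ψ` forces `w ⊨ φ` through the all-false-capped profile. -/

def MF.depth : MF → ℕ
  | .var _ | .nvar _ | .top | .bot => 0
  | .and φ ψ | .or φ ψ => max φ.depth ψ.depth
  | .dia φ | .box φ => φ.depth + 1

inductive NegForm (P : Set ℕ) : MF → Prop
  | nvar {p : ℕ} : p ∈ P → NegForm P (.nvar p)
  | and {φ ψ : MF} : NegForm P φ → NegForm P ψ → NegForm P (.and φ ψ)
  | or {φ ψ : MF} : NegForm P φ → NegForm P ψ → NegForm P (.or φ ψ)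
  | dia {φ : MF} : NegForm P φ → NegForm P (.dia φ)
  | box {φ : MF} : NegForm P φ → NegForm P (.box φ)

theorem NegForm.of_inNegLang {P : Set ℕ} {φ : MF}
    (h : inNegLang {Conn.box, Conn.dia, Conn.conj, Conn.disj} P φ) : NegForm P φ := by
  obtain ⟨⟨hc, hv⟩, hp⟩ := h
  replace hv : φ.nvars ⊆ P := Set.subset_union_right.trans hv
  induction φ with
  | var p => simp [Negative, MF.pvars] at hp
  | nvar p => exact .nvar (hv rfl)
  | top => simp [MF.conns] at hc
  | bot => simp [MF.conns] at hc
  | and φ ψ ihφ ihψ =>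
    simp only [Negative, MF.conns, MF.nvars, MF.pvars, Set.union_subset_iff,
      Set.union_empty_iff] at hc hv hp ihφ ihψ
    exact .and (ihφ hp.1 hc.1.1 hv.1) (ihψ hp.2 hc.1.2 hv.2)
  | or φ ψ ihφ ihψ =>
    simp only [Negative, MF.conns, MF.nvars, MF.pvars, Set.union_subset_iff,
      Set.union_empty_iff] at hc hv hp ihφ ihψ
    exact .or (ihφ hp.1 hc.1.1 hv.1) (ihψ hp.2 hc.1.2 hv.2)
  | dia φ ih => exact .dia (ih hp (Set.union_subset_iff.1 hc).1 hv)
  | box φ ih => exact .box (ih hp (Set.union_subset_iff.1 hc).1 hv)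

def KModel.restrict (M : KModel) (S : Set M.W) : KModel where
  W := S
  R x y := M.R x y
  V p := {x | ↑x ∈ M.V p}

theorem KModel.sat_restrict (M : KModel) {S : Set M.W}
    (hS : ∀ x y, x ∈ S → M.R x y → y ∈ S) (ψ : MF) (x : S) :
    (M.restrict S).sat x ψ ↔ M.sat x ψ := by
  induction ψ generalizing x with
  | var p | nvar p | top | bot => rfl
  | and φ ψ ihφ ihψ => exact and_congr (ihφ x) (ihψ x)
  | or φ ψ ihφ ihψ => exact or_congr (ihφ x) (ihψ x)
  | dia φ ih =>
    refine ⟨fun ⟨y, hxy, hy⟩ => ⟨y.1, hxy, (ih y).1 hy⟩, fun ⟨y, hxy, hy⟩ => ?_⟩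
    exact ⟨⟨y, hS x y x.2 hxy⟩, hxy, (ih _).2 hy⟩
  | box φ ih =>
    exact ⟨fun h y hxy => (ih ⟨y, hS x y x.2 hxy⟩).1 (h _ hxy), fun h y hxy => (ih y).2 (h y.1 hxy)⟩

section Profiles

variable (P : Set ℕ)

def Profile : ℕ → Type
  | 0 => Unit
  | k + 1 => Set P × Set (Profile k)

def profile (M : KModel) : (k : ℕ) → M.W → Profile P k
  | 0, _ => ()
  | k + 1, w => ({p | w ∈ M.V p}, profile M k '' {w' | M.R w w'})

def profileRel : (Σ k, Profile P k) → (Σ k, Profile P k) → Prop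
  | ⟨0, _⟩, y => y.1 = 0
  | ⟨k + 1, q⟩, y => ∃ q' ∈ q.2, y = ⟨k, q'⟩

def profileVal (b : Bool) (p : ℕ) : (Σ k, Profile P k) → Prop
  | ⟨0, _⟩ => b
  | ⟨_ + 1, q⟩ => ∃ h : p ∈ P, ⟨p, h⟩ ∈ q.1

def profileModel (b : Bool) : KModel where
  W := Σ k, Profile P k
  R := profileRel P
  V p := {x | profileVal P b p x}

variable {P}

theorem profileRel_profile_iff {M : KModel} {k : ℕ} {w : M.W} {y : Σ k, Profile P k} :
    profileRel P ⟨k + 1, profile P M (k + 1) w⟩ y ↔ ∃ w', M.R w w' ∧ y = ⟨k, profile P M k w'⟩ := by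
  simp only [profileRel, profile, Set.mem_image, Set.mem_ofPred_eq]
  constructor
  · rintro ⟨_, ⟨w', hw', rfl⟩, rfl⟩; exact ⟨w', hw', rfl⟩
  · rintro ⟨w', hw', rfl⟩; exact ⟨_, ⟨w', hw', rfl⟩, rfl⟩

theorem mem_profileModel_V_iff {M : KModel} {b : Bool} {k : ℕ} {w : M.W} {p : ℕ} :
    (⟨k + 1, profile P M (k + 1) w⟩ : (profileModel P b).W) ∈ (profileModel P b).V p ↔
      p ∈ P ∧ w ∈ M.V p :=
  ⟨fun ⟨hp, hw⟩ => ⟨hp, hw⟩, fun ⟨hp, hw⟩ => ⟨hp, hw⟩⟩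

theorem profileModel_sat_cap_iff {b : Bool} {ψ : MF} (hψ : NegForm P ψ)
    (x : (profileModel P b).W) (hx : x.1 = 0) : (profileModel P b).sat x ψ ↔ b = false := by
  obtain ⟨_, u⟩ := x
  subst hx
  induction hψ generalizing u with
  | nvar _ => exact Bool.not_eq_true b ▸ Iff.rfl
  | and _ _ ihφ ihψ => exact (and_congr (ihφ u) (ihψ u)).trans and_self_iff
  | or _ _ ihφ ihψ => exact (or_congr (ihφ u) (ihψ u)).trans or_self_iff
  | dia _ ih =>
    refine ⟨fun ⟨⟨_, v⟩, hv, h⟩ => ?_, fun hb => ⟨⟨0, ()⟩, rfl, (ih ()).2 hb⟩⟩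
    obtain rfl : _ = 0 := hv
    exact (ih v).1 h
  | box _ ih =>
    refine ⟨fun h => (ih ()).1 (h ⟨0, ()⟩ rfl), fun hb ⟨_, v⟩ hv => ?_⟩
    obtain rfl : _ = 0 := hv
    exact (ih v).2 hb

theorem profileModel_sat_of_sat {M : KModel} {b : Bool} {ψ : MF} (hψ : NegForm P ψ) {k : ℕ}
    (hk : ψ.depth < k ∨ b = false) {w : M.W} (h : M.sat w ψ) :
    (profileModel P b).sat ⟨k, profile P M k w⟩ ψ := by
  induction k generalizing ψ w with
  | zero => exact (profileModel_sat_cap_iff hψ _ rfl).2 (hk.resolve_left (Nat.not_lt_zero _))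
  | succ k ihk =>
    induction hψ generalizing w with
    | nvar _ => exact fun hv => h (mem_profileModel_V_iff.1 hv).2
    | and _ _ ihφ ihψ =>
      exact ⟨ihφ (hk.imp_left (le_max_left _ _).trans_lt) h.1,
        ihψ (hk.imp_left (le_max_right _ _).trans_lt) h.2⟩
    | or _ _ ihφ ihψ =>
      exact h.imp (ihφ (hk.imp_left (le_max_left _ _).trans_lt))
        (ihψ (hk.imp_left (le_max_right _ _).trans_lt))
    | dia hχ _ =>
      obtain ⟨w', hw', hχw'⟩ := h
      exact ⟨_, profileRel_profile_iff.2 ⟨w', hw', rfl⟩,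
        ihk hχ (hk.imp_left Nat.lt_of_succ_lt_succ) hχw'⟩
    | box hχ _ =>
      intro y hy
      obtain ⟨w', hw', rfl⟩ := profileRel_profile_iff.1 hy
      exact ihk hχ (hk.imp_left Nat.lt_of_succ_lt_succ) (h w' hw')

theorem sat_of_profileModel_sat {M : KModel} {b : Bool} {ψ : MF} (hψ : NegForm P ψ) {k : ℕ}
    (hk : ψ.depth < k ∨ b = true) {w : M.W} (h : (profileModel P b).sat ⟨k, profile P M k w⟩ ψ) :
    M.sat w ψ := by
  induction k generalizing ψ w with
  | zero =>
    obtain rfl := hk.resolve_left (Nat.not_lt_zero _)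
    exact absurd ((profileModel_sat_cap_iff hψ _ rfl).1 h) (by decide)
  | succ k ihk =>
    induction hψ generalizing w with
    | nvar hp => exact fun hw => h (mem_profileModel_V_iff.2 ⟨hp, hw⟩)
    | and _ _ ihφ ihψ =>
      exact ⟨ihφ (hk.imp_left (le_max_left _ _).trans_lt) h.1,
        ihψ (hk.imp_left (le_max_right _ _).trans_lt) h.2⟩
    | or _ _ ihφ ihψ =>
      exact h.imp (ihφ (hk.imp_left (le_max_left _ _).trans_lt))
        (ihψ (hk.imp_left (le_max_right _ _).trans_lt))
    | dia hχ _ =>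
      obtain ⟨y, hy, hχy⟩ := h
      obtain ⟨w', hw', rfl⟩ := profileRel_profile_iff.1 hy
      exact ⟨w', hw', ihk hχ (hk.imp_left Nat.lt_of_succ_lt_succ) hχy⟩
    | box hχ _ =>
      exact fun w' hw' => ihk hχ (hk.imp_left Nat.lt_of_succ_lt_succ)
        (h _ (profileRel_profile_iff.2 ⟨w', hw', rfl⟩))

theorem profileRel_fst_le {x y : Σ k, Profile P k} (h : profileRel P x y) : y.1 ≤ x.1 := by
  obtain ⟨_ | k, q⟩ := x
  · exact (h : y.1 = 0).le
  · obtain ⟨q', -, rfl⟩ := h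
    exact Nat.le_succ k

theorem finite_profile (hP : P.Finite) (k : ℕ) : Finite (Profile P k) := by
  have := hP.to_subtype
  induction k with
  | zero => exact inferInstanceAs (Finite Unit)
  | succ k ih => exact inferInstanceAs (Finite (Set P × Set (Profile P k)))

def profileExample (b : Bool) (n : ℕ) (q : Profile P n) : PModel :=
  ⟨(profileModel P b).restrict {x : Σ k, Profile P k | x.1 ≤ n}, ⟨⟨n, q⟩, le_refl n⟩⟩

theorem profileExample_sat_iff {b : Bool} {n : ℕ} {q : Profile P n} {ψ : MF} :
    (profileExample b n q).sat ψ ↔ (profileModel P b).sat ⟨n, q⟩ ψ :=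
  (profileModel P b).sat_restrict (fun _ _ hx hxy => (profileRel_fst_le hxy).trans hx) ψ _

theorem profileExample_finite (hP : P.Finite) (b : Bool) (n : ℕ) (q : Profile P n) :
    (profileExample b n q).finite := by
  have := finite_profile hP
  have hfin : {x : Σ k, Profile P k | x.1 ≤ n}.Finite :=
    ((Set.finite_Iic n).biUnion fun k _ => Set.finite_range (Sigma.mk k)).subset
      fun x hx => Set.mem_biUnion hx ⟨x.2, rfl⟩
  exact hfin.to_subtype (α := (profileModel P b).W)

end Profiles

/-- The negative modal language `L⁻_{□,◇,∧,∨}` is finitely characterizable: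
for every finite set `P` of propositional variables, every formula `φ ∈ L⁻_{□,◇,∧,∨}[P]`
has a finite characterization with respect to `L⁻_{□,◇,∧,∨}[P]`. -/
theorem negLang_finitely_characterizable
    (P : Set ℕ) (hfin : P.Finite) (φ : MF)
    (hφ : inNegLang {Conn.box, Conn.dia, Conn.conj, Conn.disj} P φ) :
    ∃ Epos Eneg : Set PModel,
      FinChar {ψ : MF | inNegLang {Conn.box, Conn.dia, Conn.conj, Conn.disj} P ψ}
        φ Epos Eneg := by
  have hφ' := NegForm.of_inNegLang hφ
  have := finite_profile hfin (φ.depth + 1)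
  refine ⟨profileExample true _ '' {q | (profileModel P true).sat ⟨φ.depth + 1, q⟩ φ},
    profileExample false _ '' {q | ¬(profileModel P false).sat ⟨φ.depth + 1, q⟩ φ},
    (Set.toFinite _).image _, (Set.toFinite _).image _,
    fun _ ⟨q, _, he⟩ => he ▸ profileExample_finite hfin _ _ q,
    fun _ ⟨q, _, he⟩ => he ▸ profileExample_finite hfin _ _ q,
    ⟨fun _ ⟨q, hq, he⟩ => he ▸ profileExample_sat_iff.2 hq,
      fun _ ⟨q, hq, he⟩ => he ▸ mt profileExample_sat_iff.1 hq⟩, ?_⟩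
  rintro ψ hψ ⟨hpos, hneg⟩ ⟨M, s⟩
  have hψ' := NegForm.of_inNegLang hψ
  have hdepth : φ.depth < φ.depth + 1 := Nat.lt_succ_self _
  constructor
  · intro hs
    have hψs := hpos _ ⟨profile P M _ s, profileModel_sat_of_sat hφ' (.inl hdepth) hs, rfl⟩
    exact sat_of_profileModel_sat hψ' (.inr rfl) (profileExample_sat_iff.1 hψs)
  · intro hs
    by_contra hφs
    refine hneg _ ⟨profile P M _ s, fun h => hφs ?_, rfl⟩
      (profileExample_sat_iff.2 (profileModel_sat_of_sat hψ' (.inr rfl) hs))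
    exact sat_of_profileModel_sat hφ' (.inl hdepth) h
end
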